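/- arXiv:1208.1595 — 2 statements merged into one kernel-verified Lean document; each statement's English description precedes it below -/
import Mathlib

section
/- Let α be a type and let R_s, R_w, S_s, S_w be binary relations on α. If the relation (R_s ∪ S_s) ∘ (R_w ∪ S_w)* is strongly normalizing and the relation R_w ∘ S_w* is strongly normalizing, then the relation (R_s ∪ R_w) ∘ (S_s ∪ S_w)* is strongly normalizing. (Equivalently: relative termination of (R_s ∪ S_s)/(R_w ∪ S_w) together with relative termination of R_w/S_w implies relative termination of (R_s ∪ R_w)/(S_s ∪ S_w).) -/
/-- `T` is strongly normalizing: no infinite `T`-sequence. -/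
def SN {α : Type*} (T : α → α → Prop) : Prop :=
  ¬ ∃ f : ℕ → α, ∀ i, T (f i) (f (i + 1))

/-- `T` is strongly normalizing at `a`: no infinite `T`-sequence starting in `a`. -/
def SNAt {α : Type*} (T : α → α → Prop) (a : α) : Prop :=
  ¬ ∃ f : ℕ → α, f 0 = a ∧ ∀ i, T (f i) (f (i + 1))

/-- Minimal infinite standard DP `(P,R)`-chain given by sequences `a b : ℕ → α`. -/
def MinChain {α : Type*} (P R : α → α → Prop) (a b : ℕ → α) : Prop :=
  (∀ i, P (a i) (b i)) ∧
  (∀ i, Relation.ReflTransGen R (b i) (a (i + 1))) ∧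
  (∀ i, SNAt R (b i))

/-- The standard DP problem `(P,R)` is finite: there is no minimal infinite chain. -/
def DPFinite {α : Type*} (P R : α → α → Prop) : Prop :=
  ¬ ∃ a b : ℕ → α, MinChain P R a b

/-- Minimal infinite relative DP `(P,Pw,R,Rw)`-chain given by sequences `a b : ℕ → α`. -/
def MinRelChain {α : Type*} (P Pw R Rw : α → α → Prop) (a b : ℕ → α) : Prop :=
  (∀ i, (P ⊔ Pw) (a i) (b i)) ∧
  (∀ i, Relation.ReflTransGen (R ⊔ Rw) (b i) (a (i + 1))) ∧
  (∀ N, ∃ i, N ≤ i ∧ (P (a i) (b i) ∨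
    ∃ u v, Relation.ReflTransGen (R ⊔ Rw) (b i) u ∧ R u v ∧
      Relation.ReflTransGen (R ⊔ Rw) v (a (i + 1)))) ∧
  (∀ i, SNAt (R ⊔ Rw) (b i))

/-- The relative DP problem `(P,Pw,R,Rw)` is finite: no minimal infinite chain. -/
def RelDPFinite {α : Type*} (P Pw R Rw : α → α → Prop) : Prop :=
  ¬ ∃ a b : ℕ → α, MinRelChain P Pw R Rw a b

/-!
Write `W = Rw ∪ Sw` and `C = (Rs ∪ Ss) ∘ W*`. A step of `(Rs ∪ Rw) ∘ (Ss ∪ Sw)*` either uses only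
`Rw` followed by `Sw*`, i.e. is a step of `Rw ∘ Sw*`, or contains a strong step and then lies in
`W* ∘ C⁺`. An infinite chain has either only finitely many steps of the second kind, and its tail
contradicts termination of `Rw / Sw`, or infinitely many, and regrouping it gives an infinite
`C`-chain, since `C⁺` absorbs the `W*`-steps in between.
-/

open Relation

namespace SN

variable {α : Type*} {A B T T' : α → α → Prop}

theorem mono (hT' : SN T') (h : T ≤ T') : SN T :=
  fun ⟨f, hf⟩ => hT' ⟨f, fun i => h _ _ (hf i)⟩

theorem iff_wellFounded_swap : SN T ↔ WellFounded (Function.swap T) := by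
  simp [SN, wellFounded_iff_isEmpty_descending_chain, isEmpty_subtype, Function.swap]

theorem transGen (h : SN T) : SN (TransGen T) :=
  iff_wellFounded_swap.mpr <|
    (iff_wellFounded_swap.mp h).transGen.mono fun _ _ hab => transGen_swap.mpr hab

theorem comp_comm (h : SN (Comp A B)) : SN (Comp B A) := by
  rintro ⟨f, hf⟩
  choose g hBg hAg using hf
  exact h ⟨g, fun i => ⟨f (i + 1), hAg i, hBg (i + 1)⟩⟩

theorem sup_of_comp_reflTransGen (hB : SN B) (hA : SN (Comp A (ReflTransGen B))) :
    SN (A ⊔ B) := by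
  rintro ⟨f, hf⟩
  let p : ℕ → Prop := fun i => A (f i) (f (i + 1))
  by_cases hp : (Set.ofPred p).Infinite
  · refine hA ⟨fun n => f (Nat.nth p n),
      fun n => ⟨f (Nat.nth p n + 1), Nat.nth_mem_of_infinite hp n, ?_⟩⟩
    have hB_between :
        ∀ i ∈ Set.Ico (Nat.nth p n + 1) (Nat.nth p (n + 1)), B (f i) (f (i + 1)) := by
      rintro i ⟨hi, hi'⟩
      refine (hf i).resolve_left fun hpi => ?_
      have := Nat.le_nth_of_lt_nth_succ hi' hpi
      omega
    exact (reflTransGen_of_succ_of_le (fun i j => B (f i) (f j)) hB_between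
      (Nat.nth_strictMono hp n.lt_succ_self)).lift f fun _ _ h => h
  · obtain ⟨N, hN⟩ := (Set.not_infinite.mp hp).bddAbove
    refine hB ⟨fun i => f (N + 1 + i), fun i => (hf _).resolve_left fun hpi => ?_⟩
    have := hN hpi
    omega

end SN

section

variable {α : Type*}

theorem transGen_comp_trans_reflTransGen {X W : α → α → Prop} {a b c : α}
    (hab : TransGen (Comp X (ReflTransGen W)) a b) (hbc : ReflTransGen W b c) :
    TransGen (Comp X (ReflTransGen W)) a c := by
  obtain ⟨d, had, e, hde, heb⟩ := TransGen.tail'_iff.mp hab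
  exact .tail' had ⟨e, hde, heb.trans hbc⟩

theorem comp_reflTransGen_le_reflTransGen_sup (R S : α → α → Prop) :
    Comp R (ReflTransGen S) ≤ ReflTransGen (R ⊔ S) :=
  fun _ _ ⟨_, hR, hS⟩ => .head (Or.inl hR) (ReflTransGen.mono (fun _ _ => Or.inr) _ _ hS)

theorem comp_sup_reflTransGen_sup_le (Rs Rw Ss Sw : α → α → Prop) :
    Comp (Rs ⊔ Rw) (ReflTransGen (Ss ⊔ Sw)) ≤
      Comp (ReflTransGen (Rw ⊔ Sw)) (TransGen (Comp (Rs ⊔ Ss) (ReflTransGen (Rw ⊔ Sw)))) ⊔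
        Comp Rw (ReflTransGen Sw) := by
  rintro a b ⟨c, hac, hcb⟩
  induction hcb with
  | refl =>
    rcases hac with hs | hw
    · exact Or.inl ⟨a, .refl, .single ⟨c, Or.inl hs, .refl⟩⟩
    · exact Or.inr ⟨c, hw, .refl⟩
  | @tail b b' _ hstep ih =>
    rcases ih, hstep with ⟨⟨x, hax, hxb⟩ | hD, hs | hw⟩
    · exact Or.inl ⟨x, hax, hxb.tail ⟨b', Or.inr hs, .refl⟩⟩
    · exact Or.inl ⟨x, hax, transGen_comp_trans_reflTransGen hxb (.single (Or.inr hw))⟩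
    · exact Or.inl ⟨b, comp_reflTransGen_le_reflTransGen_sup Rw Sw _ _ hD,
        .single ⟨b', Or.inr hs, .refl⟩⟩
    · obtain ⟨d, had, hdb⟩ := hD
      exact Or.inr ⟨d, had, hdb.tail hw⟩

end

/-- Geser's split: relative termination of `(Rs ∪ Ss) / (Rw ∪ Sw)` and of `Rw / Sw`
implies relative termination of `(Rs ∪ Rw) / (Ss ∪ Sw)`. -/
theorem split_relative_termination {α : Type*} (Rs Rw Ss Sw : α → α → Prop)
    (h1 : SN (Relation.Comp (Rs ⊔ Ss) (Relation.ReflTransGen (Rw ⊔ Sw))))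
    (h2 : SN (Relation.Comp Rw (Relation.ReflTransGen Sw))) :
    SN (Relation.Comp (Rs ⊔ Rw) (Relation.ReflTransGen (Ss ⊔ Sw))) := by
  have hCW : SN (Comp (TransGen (Comp (Rs ⊔ Ss) (ReflTransGen (Rw ⊔ Sw))))
      (ReflTransGen (Rw ⊔ Sw))) :=
    h1.transGen.mono fun _ _ ⟨_, hC, hW⟩ => transGen_comp_trans_reflTransGen hC hW
  have hWC : SN (Comp (Comp (ReflTransGen (Rw ⊔ Sw))
      (TransGen (Comp (Rs ⊔ Ss) (ReflTransGen (Rw ⊔ Sw)))))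
      (ReflTransGen (Comp Rw (ReflTransGen Sw)))) :=
    hCW.comp_comm.mono fun _ _ ⟨_, ⟨x, hW, hC⟩, hD⟩ =>
      ⟨x, hW, transGen_comp_trans_reflTransGen hC
        (reflTransGen_closed (comp_reflTransGen_le_reflTransGen_sup Rw Sw) _ _ hD)⟩
  exact (h2.sup_of_comp_reflTransGen hWC).mono (comp_sup_reflTransGen_sup_le Rs Rw Ss Sw)
end

section
/- Soundness of the split processor: let α be a type and let P¹ₛ, P¹w, P²ₛ, P²w, R¹ₛ, R¹w, R²ₛ, R²w be binary relations on α. If the relative DP problem (P¹ₛ ∪ P²ₛ, P¹w ∪ P²w, R¹ₛ ∪ R²ₛ, R¹w ∪ R²w) is finite and the relative DP problem (P¹w, P²w, R¹w, R²w) is finite, then the relative DP problem (P¹ₛ ∪ P¹w, P²ₛ ∪ P²w, R¹ₛ ∪ R¹w, R²ₛ ∪ R²w) is finite. -/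
/-!
Take a minimal infinite chain of the split problem. Its pairs and rules are the same unions as
those of the first hypothesis' problem, so the chain is a chain of that problem unless, from some
index on, it never uses a pair of `P¹ₛ ∪ P²ₛ` nor a rule of `R¹ₛ ∪ R²ₛ`. In that case the tail of
the chain only uses the weak pairs and rules, and each of its infinitely many strict positions
uses a pair of `P¹w` or a step of `R¹w`: it is a minimal infinite chain of `(P¹w, P²w, R¹w, R²w)`.
-/

open Relation Filter

section

variable {α : Type*}

def ReachesThrough (S R : α → α → Prop) (x y : α) : Prop :=
  ∃ u v, ReflTransGen S x u ∧ R u v ∧ ReflTransGen S v y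

theorem Relation.ReflTransGen.of_sup_of_not_reachesThrough {A B : α → α → Prop} {x y : α}
    (h : ReflTransGen (A ⊔ B) x y) (hA : ¬ ReachesThrough (A ⊔ B) A x y) :
    ReflTransGen B x y := by
  induction h using ReflTransGen.head_induction_on with
  | refl => exact .refl
  | @head x z hxz hzy ih =>
    rcases hxz with hxz | hxz
    · exact absurd ⟨x, z, .refl, hxz, hzy⟩ hA
    · exact .head hxz <| ih fun ⟨u, v, hzu, huv, hvy⟩ =>
        hA ⟨u, v, .head (Or.inr hxz) hzu, huv, hvy⟩

theorem ReachesThrough.of_sup {A B C : α → α → Prop} {x y : α}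
    (h : ReachesThrough (A ⊔ B) C x y) (hC : C ≤ B) (hA : ¬ ReachesThrough (A ⊔ B) A x y) :
    ReachesThrough B C x y := by
  obtain ⟨u, v, hxu, huv, hvy⟩ := h
  have huv' : (A ⊔ B) u v := Or.inr (hC u v huv)
  refine ⟨u, v, hxu.of_sup_of_not_reachesThrough ?_, huv, hvy.of_sup_of_not_reachesThrough ?_⟩
  · rintro ⟨u', v', hxu', hA', hv'u⟩
    exact hA ⟨u', v', hxu', hA', hv'u.trans (.head huv' hvy)⟩
  · rintro ⟨u', v', hvu', hA', hv'y⟩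
    exact hA ⟨u', v', hxu.trans (.head huv' hvu'), hA', hv'y⟩

theorem SNAt.mono {T T' : α → α → Prop} {x : α} (h : SNAt T x) (hT : T' ≤ T) : SNAt T' x :=
  fun ⟨f, hf0, hf⟩ => h ⟨f, hf0, fun i => hT _ _ (hf i)⟩

def RelStrictAt (P R S : α → α → Prop) (a b : ℕ → α) (i : ℕ) : Prop :=
  P (a i) (b i) ∨ ReachesThrough S R (b i) (a (i + 1))

section MinRelChain

variable {P Pw R Rw : α → α → Prop} {a b : ℕ → α}

theorem minRelChain_iff : MinRelChain P Pw R Rw a b ↔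
    (∀ i, (P ⊔ Pw) (a i) (b i)) ∧ (∀ i, ReflTransGen (R ⊔ Rw) (b i) (a (i + 1))) ∧
      (∃ᶠ i in atTop, RelStrictAt P R (R ⊔ Rw) a b i) ∧ ∀ i, SNAt (R ⊔ Rw) (b i) := by
  rw [frequently_atTop]
  rfl

theorem MinRelChain.shift (h : MinRelChain P Pw R Rw a b) (N : ℕ) :
    MinRelChain P Pw R Rw (fun i => a (i + N)) (fun i => b (i + N)) := by
  obtain ⟨hpair, hpath, hstrict, hsn⟩ := minRelChain_iff.1 h
  have hstrict' : ∃ᶠ i in atTop, RelStrictAt P R (R ⊔ Rw) a b (i + N) :=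
    frequently_map.1 <| (map_add_atTop_eq_nat N).symm ▸ hstrict
  refine minRelChain_iff.2 ⟨fun i => hpair _, fun i => ?_, ?_, fun i => hsn _⟩
  · simpa only [Nat.add_right_comm] using hpath (i + N)
  · simpa only [RelStrictAt, Nat.add_right_comm] using hstrict'

theorem MinRelChain.of_sup_eq {P' Pw' R' Rw' : α → α → Prop} (h : MinRelChain P Pw R Rw a b)
    (hP : P ⊔ Pw = P' ⊔ Pw') (hR : R ⊔ Rw = R' ⊔ Rw')
    (hs : ∃ᶠ i in atTop, RelStrictAt P' R' (R' ⊔ Rw') a b i) :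
    MinRelChain P' Pw' R' Rw' a b := by
  obtain ⟨hpair, hpath, -, hsn⟩ := minRelChain_iff.1 h
  rw [hP] at hpair
  rw [hR] at hpath hsn
  exact minRelChain_iff.2 ⟨hpair, hpath, hs, hsn⟩

end MinRelChain

theorem MinRelChain.weak_of_forall_not_strictAt {P1s P1w P2s P2w R1s R1w R2s R2w : α → α → Prop}
    {a b : ℕ → α} (h : MinRelChain (P1s ⊔ P1w) (P2s ⊔ P2w) (R1s ⊔ R1w) (R2s ⊔ R2w) a b)
    (hs : ∀ i, ¬ RelStrictAt (P1s ⊔ P2s) (R1s ⊔ R2s) (R1s ⊔ R1w ⊔ (R2s ⊔ R2w)) a b i) :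
    MinRelChain P1w P2w R1w R2w a b := by
  obtain ⟨hpair, hpath, hstrict, hsn⟩ := minRelChain_iff.1 h
  rw [sup_sup_sup_comm R1s] at hpath hstrict hsn hs
  refine minRelChain_iff.2 ⟨fun i => ?_,
    fun i => (hpath i).of_sup_of_not_reachesThrough (not_or.1 (hs i)).2,
    hstrict.mono fun i hi => ?_, fun i => (hsn i).mono le_sup_right⟩
  · obtain ⟨hnP, -⟩ := not_or.1 (hs i)
    rcases hpair i with (hP | hP) | (hP | hP)
    · exact absurd (Or.inl hP) hnP
    · exact Or.inl hP
    · exact absurd (Or.inr hP) hnP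
    · exact Or.inr hP
  · obtain ⟨hnP, hnR⟩ := not_or.1 (hs i)
    rcases hi with (hP | hP) | ⟨u, v, hu, hR | hR, hv⟩
    · exact absurd (Or.inl hP) hnP
    · exact Or.inl hP
    · exact absurd ⟨u, v, hu, Or.inl hR, hv⟩ hnR
    · exact Or.inr (ReachesThrough.of_sup ⟨u, v, hu, hR, hv⟩ le_sup_left hnR)

end

/-- Soundness of the split processor. -/
theorem split_processor_sound {α : Type*}
    (P1s P1w P2s P2w R1s R1w R2s R2w : α → α → Prop)
    (h1 : RelDPFinite (P1s ⊔ P2s) (P1w ⊔ P2w) (R1s ⊔ R2s) (R1w ⊔ R2w))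
    (h2 : RelDPFinite P1w P2w R1w R2w) :
    RelDPFinite (P1s ⊔ P1w) (P2s ⊔ P2w) (R1s ⊔ R1w) (R2s ⊔ R2w) := by
  rintro ⟨a, b, hab⟩
  by_cases hs : ∃ᶠ i in atTop,
      RelStrictAt (P1s ⊔ P2s) (R1s ⊔ R2s) (R1s ⊔ R1w ⊔ (R2s ⊔ R2w)) a b i
  · refine h1 ⟨a, b, hab.of_sup_eq (sup_sup_sup_comm ..) (sup_sup_sup_comm ..) ?_⟩
    rwa [← sup_sup_sup_comm R1s]
  · obtain ⟨N, hN⟩ := eventually_atTop.1 (not_frequently.1 hs)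
    refine h2 ⟨_, _, (hab.shift N).weak_of_forall_not_strictAt fun i => ?_⟩
    simpa only [RelStrictAt, Nat.add_right_comm] using hN (i + N) (Nat.le_add_left N i)
end
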